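/- arXiv:1904.12777 — 2 statements merged into one kernel-verified Lean document; each statement's English description precedes it below -/
import Mathlib

section
/- A vertical line of k cells can be transformed into a horizontal line of k cells using exactly 2k − 2 permissible line moves. -/
/-- The four axis-parallel unit directions. -/
def unitDir (v : ℤ × ℤ) : Prop :=
  v = (1, 0) ∨ v = (-1, 0) ∨ v = (0, 1) ∨ v = (0, -1)

/-- A permissible line move: a node `u` is pushed one step in direction `v`,
pushing along the run of `k ≥ 1` consecutive occupied cells starting at `u`,
whose next cell in direction `v` is empty; the configuration is translated by
vacating the rear cell `u` and occupying the front cell `u + k•v`. -/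
def lineMove (C C' : Finset (ℤ × ℤ)) : Prop :=
  ∃ (u v : ℤ × ℤ) (k : ℕ), unitDir v ∧ 1 ≤ k ∧
    (∀ j : ℕ, j < k → u + j • v ∈ C) ∧
    u + k • v ∉ C ∧
    C' = insert (u + k • v) (C.erase u)

/-- `reachIn n A B`: configuration `A` can be transformed into `B` by a
sequence of exactly `n` permissible line moves. -/
def reachIn (n : ℕ) (A B : Finset (ℤ × ℤ)) : Prop :=
  ∃ f : ℕ → Finset (ℤ × ℤ), f 0 = A ∧ f n = B ∧
    ∀ i : ℕ, i < n → lineMove (f i) (f (i + 1))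

/-- Horizontal segment of `n` cells starting at `(c, d)`. -/
def hseg (c d : ℤ) (n : ℕ) : Finset (ℤ × ℤ) :=
  (Finset.range n).image fun i : ℕ => (c + (i : ℤ), d)

/-- Vertical segment of `n` cells starting at `(c, d)`. -/
def vseg (c d : ℤ) (n : ℕ) : Finset (ℤ × ℤ) :=
  (Finset.range n).image fun i : ℕ => (c, d + (i : ℤ))

lemma mem_hseg {c d a b : ℤ} {n : ℕ} :
    (a, b) ∈ hseg c d n ↔ b = d ∧ c ≤ a ∧ a < c + n := by
  simp only [hseg, Finset.mem_image, Finset.mem_range, Prod.mk.injEq]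
  constructor
  · rintro ⟨i, hi, h1, h2⟩; omega
  · rintro ⟨h1, h2, h3⟩; exact ⟨(a - c).toNat, by omega, by omega, by omega⟩

lemma mem_vseg {c d a b : ℤ} {n : ℕ} :
    (a, b) ∈ vseg c d n ↔ a = c ∧ d ≤ b ∧ b < d + n := by
  simp only [vseg, Finset.mem_image, Finset.mem_range, Prod.mk.injEq]
  constructor
  · rintro ⟨i, hi, h1, h2⟩; omega
  · rintro ⟨h1, h2, h3⟩; exact ⟨(b - d).toNat, by omega, by omega, by omega⟩

/-- Configuration after `m` full stages: `m` horizontal cells to the right of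
`x`, plus a vertical stack of `k - m` cells above (and including) `(x, y)`. -/
def Cm (x y : ℤ) (k m : ℕ) : Finset (ℤ × ℤ) := hseg (x+1) y m ∪ vseg x y (k - m)

/-- Configuration after the first half of stage `m+1`: the bottom cell has been
pushed right, extending the horizontal run to `m+1` cells, leaving the vertical
stack of `k - 1 - m` cells hanging one cell above `(x, y)`. -/
def Dm (x y : ℤ) (k m : ℕ) : Finset (ℤ × ℤ) := hseg (x+1) y (m+1) ∪ vseg x (y+1) (k - 1 - m)

lemma moveA (x y : ℤ) (k m : ℕ) (h : m + 2 ≤ k) :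
    lineMove (Cm x y k m) (Dm x y k m) := by
  have hsm : ∀ j : ℕ, (x, y) + j • ((1:ℤ), (0:ℤ)) = (x + j, y) := by
    intro j; simp [Prod.ext_iff]
  refine ⟨(x, y), (1, 0), m + 1, Or.inl rfl, by omega, ?_, ?_, ?_⟩
  · intro j hj
    rw [hsm]
    rcases Nat.eq_zero_or_pos j with h0 | h0
    · subst h0; exact Finset.mem_union_right _ (mem_vseg.2 ⟨by omega, by omega, by omega⟩)
    · exact Finset.mem_union_left _ (mem_hseg.2 ⟨by omega, by omega, by omega⟩)
  · rw [hsm]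
    simp only [Cm, Finset.mem_union, mem_hseg, mem_vseg]
    push_cast; omega
  · ext ⟨a, b⟩
    rw [hsm]
    simp only [Cm, Dm, Finset.mem_insert, Finset.mem_erase, Finset.mem_union,
      mem_hseg, mem_vseg, Prod.mk.injEq, ne_eq, not_and_or]
    push_cast
    omega

lemma moveB (x y : ℤ) (k m : ℕ) (h : m + 2 ≤ k) :
    lineMove (Dm x y k m) (Cm x y k (m + 1)) := by
  have hsm : ∀ j : ℕ, (x, y + ((k:ℤ) - 1 - m)) + j • ((0:ℤ), (-1:ℤ))
      = (x, y + ((k:ℤ) - 1 - m) - j) := by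
    intro j; simp [Prod.ext_iff]; ring
  refine ⟨(x, y + ((k:ℤ) - 1 - m)), (0, -1), k - 1 - m, Or.inr (Or.inr (Or.inr rfl)), by omega,
    ?_, ?_, ?_⟩
  · intro j hj
    rw [hsm]
    exact Finset.mem_union_right _ (mem_vseg.2 ⟨by omega, by omega, by omega⟩)
  · rw [hsm]
    simp only [Dm, Finset.mem_union, mem_hseg, mem_vseg]
    push_cast; omega
  · ext ⟨a, b⟩
    rw [hsm]
    simp only [Cm, Dm, Finset.mem_insert, Finset.mem_erase, Finset.mem_union,
      mem_hseg, mem_vseg, Prod.mk.injEq, ne_eq, not_and_or]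
    push_cast
    omega

/-- A vertical line of `k` cells can be transformed into a horizontal line of
`k` cells using exactly `2k - 2` permissible line moves. -/
theorem vertical_to_horizontal (k : ℕ) (hk : 1 ≤ k) (x y : ℤ) :
    reachIn (2 * k - 2)
      ((Finset.range k).image fun (i : ℕ) => ((x, y + (i : ℤ)) : ℤ × ℤ))
      ((Finset.range k).image fun (i : ℕ) => ((x + (i : ℤ), y) : ℤ × ℤ)) := by
  refine ⟨fun n => if n % 2 = 0 then Cm x y k (n / 2) else Dm x y k (n / 2), ?_, ?_, ?_⟩
  · simp only [Nat.zero_mod, if_pos rfl, Nat.zero_div, Cm, Nat.sub_zero]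
    rw [hseg]
    simp [vseg]
  · have h1 : (2 * k - 2) % 2 = 0 := by omega
    have h2 : (2 * k - 2) / 2 = k - 1 := by omega
    dsimp only
    rw [if_pos h1, h2]
    have : ((Finset.range k).image fun (i : ℕ) => ((x + (i : ℤ), y) : ℤ × ℤ)) = hseg x y k := rfl
    rw [this]
    ext ⟨a, b⟩
    rw [Cm, Finset.mem_union, mem_hseg, mem_vseg, mem_hseg]
    omega
  · intro i hi
    dsimp only
    rcases Nat.even_or_odd i with ⟨m, hm⟩ | ⟨m, hm⟩
    · have h1 : i % 2 = 0 := by omega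
      have h2 : (i + 1) % 2 = 1 := by omega
      rw [if_pos h1, if_neg (by omega)]
      have h3 : (i + 1) / 2 = i / 2 := by omega
      rw [h3]
      exact moveA x y k (i / 2) (by omega)
    · have h1 : i % 2 = 1 := by omega
      have h2 : (i + 1) % 2 = 0 := by omega
      rw [if_neg (by omega), if_pos h2]
      have h3 : (i + 1) / 2 = i / 2 + 1 := by omega
      rw [h3]
      exact moveB x y k (i / 2) (by omega)
end

section
/- A nice shape of order n can be transformed into a straight line of order n in at most 2(n − k) line moves, where k is the length of its central line; in particular in O(n) moves. -/
/-- A configuration that is a straight (horizontal or vertical) line. -/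
def isLine (C : Finset (ℤ × ℤ)) : Prop :=
  ∃ (p v : ℤ × ℤ), (v = (1, 0) ∨ v = (0, 1)) ∧
    C = (Finset.range C.card).image fun i => p + i • v


/-! Each vertical cell is absorbed into the central line with two moves. Take a cell `(x, t)` of
`S` off the central line whose distance `|t - y₀|` is maximal. First push the part of the central
line from its base `(x, y₀)` one step to the right, which extends the line by the cell
`(x₀ + k, y₀)` and leaves a hole at `(x, y₀)`; then push the column from `(x, t)` towards the hole.
The net effect deletes `(x, t)` and lengthens the central line by one, and by maximality of `t`
the result is again a nice shape. After `n - k` rounds the shape is its central line. -/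

theorem reachIn.cons {n : ℕ} {A B C : Finset (ℤ × ℤ)} (hAB : lineMove A B)
    (hBC : reachIn n B C) : reachIn (n + 1) A C := by
  obtain ⟨f, hf0, hfn, hf⟩ := hBC
  refine ⟨fun | 0 => A | i + 1 => f i, rfl, hfn, ?_⟩
  rintro (_ | i) hi
  · simpa [hf0] using hAB
  · exact hf i (by omega)

theorem unitDir.neg {v : ℤ × ℤ} (hv : unitDir v) : unitDir (-v) := by
  rcases hv with rfl | rfl | rfl | rfl <;> simp [unitDir]

theorem lineMove_along {C : Finset (ℤ × ℤ)} {p v : ℤ × ℤ} (hv : unitDir v) {a b : ℤ}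
    (hab : a ≠ b) (hrun : ∀ z, min a b ≤ z → z ≤ max a b → z ≠ b → p + z • v ∈ C)
    (hb : p + b • v ∉ C) :
    lineMove C (insert (p + b • v) (C.erase (p + a • v))) := by
  rcases hab.lt_or_gt with hlt | hgt
  · have hstep (j : ℕ) : p + a • v + j • v = p + (a + j) • v := by
      rw [add_smul, natCast_zsmul, add_assoc]
    have hend : a + ((b - a).toNat : ℤ) = b := by omega
    refine ⟨p + a • v, v, (b - a).toNat, hv, by omega, fun j hj => ?_, ?_, ?_⟩
    · rw [hstep]; exact hrun _ (by omega) (by omega) (by omega)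
    · rwa [hstep, hend]
    · rw [hstep, hend]
  · have hstep (j : ℕ) : p + a • v + j • -v = p + (a - j) • v := by
      rw [sub_smul, ← natCast_zsmul, smul_neg, add_assoc, sub_eq_add_neg]
    have hend : a - ((a - b).toNat : ℤ) = b := by omega
    refine ⟨p + a • v, -v, (a - b).toNat, hv.neg, by omega, fun j hj => ?_, ?_, ?_⟩
    · rw [hstep]; exact hrun _ (by omega) (by omega) (by omega)
    · rwa [hstep, hend]
    · rw [hstep, hend]

theorem lineMove_row {C : Finset (ℤ × ℤ)} {y a b : ℤ} (hab : a ≠ b)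
    (hrun : ∀ z, min a b ≤ z → z ≤ max a b → z ≠ b → (z, y) ∈ C) (hb : (b, y) ∉ C) :
    lineMove C (insert (b, y) (C.erase (a, y))) := by
  simpa using lineMove_along (p := (0, y)) (v := (1, 0)) (Or.inl rfl) hab
    (by simpa using hrun) (by simpa using hb)

theorem lineMove_column {C : Finset (ℤ × ℤ)} {x a b : ℤ} (hab : a ≠ b)
    (hrun : ∀ z, min a b ≤ z → z ≤ max a b → z ≠ b → (x, z) ∈ C) (hb : (x, b) ∉ C) :
    lineMove C (insert (x, b) (C.erase (x, a))) := by
  simpa using lineMove_along (p := (x, 0)) (v := (0, 1)) (Or.inr (Or.inr (Or.inl rfl))) hab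
    (by simpa using hrun) (by simpa using hb)

def centralLine (x₀ y₀ : ℤ) (k : ℕ) : Finset (ℤ × ℤ) :=
  (Finset.range k).image fun (i : ℕ) => ((x₀ + (i : ℤ), y₀) : ℤ × ℤ)

section centralLine

variable {x₀ y₀ : ℤ} {k : ℕ}

@[simp]
theorem mem_centralLine {a b : ℤ} :
    (a, b) ∈ centralLine x₀ y₀ k ↔ x₀ ≤ a ∧ a < x₀ + k ∧ b = y₀ := by
  simp only [centralLine, Finset.mem_image, Finset.mem_range, Prod.mk.injEq]
  constructor
  · rintro ⟨i, hi, rfl, rfl⟩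
    omega
  · rintro ⟨h₁, h₂, rfl⟩
    exact ⟨(a - x₀).toNat, by omega, by omega, rfl⟩

theorem card_centralLine : (centralLine x₀ y₀ k).card = k := by
  rw [centralLine, Finset.card_image_of_injective _ fun i j hij => by simpa using hij,
    Finset.card_range]

theorem centralLine_succ :
    centralLine x₀ y₀ (k + 1) = insert (x₀ + k, y₀) (centralLine x₀ y₀ k) := by
  rw [centralLine, Finset.range_add_one, Finset.image_insert, centralLine]

theorem isLine_centralLine : isLine (centralLine x₀ y₀ k) := by
  refine ⟨(x₀, y₀), (1, 0), Or.inl rfl, ?_⟩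
  rw [card_centralLine, centralLine]
  congr 1
  ext i <;> simp

end centralLine

structure IsNiceShape (S : Finset (ℤ × ℤ)) (x₀ y₀ : ℤ) (k : ℕ) : Prop where
  centralLine_subset : centralLine x₀ y₀ k ⊆ S
  base_mem : ∀ p ∈ S, (p.1, y₀) ∈ centralLine x₀ y₀ k
  segment_mem : ∀ p ∈ S, ∀ z, min p.2 y₀ ≤ z → z ≤ max p.2 y₀ → (p.1, z) ∈ S

namespace IsNiceShape

variable {S : Finset (ℤ × ℤ)} {x₀ y₀ : ℤ} {k : ℕ}

theorem exists_farthest (h : IsNiceShape S x₀ y₀ k) (hS : ¬ S ⊆ centralLine x₀ y₀ k) :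
    ∃ x t, (x, t) ∈ S ∧ t ≠ y₀ ∧ ∀ q ∈ S, (q.2 - y₀).natAbs ≤ (t - y₀).natAbs := by
  obtain ⟨q, hq, -⟩ := Finset.not_subset.1 hS
  obtain ⟨⟨x, t⟩, hp, hmax⟩ := S.exists_max_image (fun q => (q.2 - y₀).natAbs) ⟨q, hq⟩
  refine ⟨x, t, hp, fun ht => hS fun q hq => ?_, hmax⟩
  have hq2 : q.2 = y₀ := by have := hmax q hq; simp only at this; omega
  simpa [← hq2] using h.base_mem q hq

theorem notMem_right_end (h : IsNiceShape S x₀ y₀ k) : (x₀ + k, y₀) ∉ S := fun hS => by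
  simpa using h.base_mem _ hS

theorem insert_erase_farthest (h : IsNiceShape S x₀ y₀ k) {x t : ℤ} (ht : t ≠ y₀)
    (hfar : ∀ q ∈ S, (q.2 - y₀).natAbs ≤ (t - y₀).natAbs) :
    IsNiceShape (insert (x₀ + k, y₀) (S.erase (x, t))) x₀ y₀ (k + 1) where
  centralLine_subset := by
    rw [centralLine_succ]
    refine Finset.insert_subset_insert _ (Finset.subset_erase.2 ⟨h.centralLine_subset, ?_⟩)
    simp [ht]
  base_mem q hq := by
    rw [centralLine_succ]
    rcases Finset.mem_insert.1 hq with rfl | hq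
    · exact Finset.mem_insert_self _ _
    · exact Finset.mem_insert_of_mem (h.base_mem q (Finset.mem_of_mem_erase hq))
  segment_mem q hq z hz₁ hz₂ := by
    rcases Finset.mem_insert.1 hq with rfl | hq
    · obtain rfl : z = y₀ := by simp only at hz₁ hz₂; omega
      exact Finset.mem_insert_self _ _
    obtain ⟨hqp, hqS⟩ := Finset.mem_erase.1 hq
    refine Finset.mem_insert_of_mem
      (Finset.mem_erase.2 ⟨fun hzp => hqp ?_, h.segment_mem q hqS z hz₁ hz₂⟩)
    -- `|t - y₀|` is maximal, so no segment other than that of `(x, t)` reaches `(x, t)`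
    have := hfar q hqS
    simp only [Prod.mk.injEq] at hzp
    ext <;> simp only <;> omega

theorem exists_absorb (h : IsNiceShape S x₀ y₀ k) (hS : ¬ S ⊆ centralLine x₀ y₀ k) :
    ∃ S₁ S₂, lineMove S S₁ ∧ lineMove S₁ S₂ ∧ IsNiceShape S₂ x₀ y₀ (k + 1) ∧
      S₂.card = S.card := by
  obtain ⟨x, t, hxt, ht, hfar⟩ := h.exists_farthest hS
  have hx : x₀ ≤ x ∧ x < x₀ + k := by simpa using h.base_mem _ hxt
  have hbase : (x, y₀) ∈ S := h.segment_mem _ hxt y₀ (min_le_right _ _) (le_max_right _ _)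
  have hend := h.notMem_right_end
  set S₁ := insert (x₀ + k, y₀) (S.erase (x, y₀))
  have hrow : lineMove S S₁ := by
    refine lineMove_row (by omega) (fun z hz₁ hz₂ hz => h.centralLine_subset ?_) hend
    rw [min_eq_left (by omega)] at hz₁
    rw [max_eq_right (by omega)] at hz₂
    simp only [mem_centralLine, and_true]
    omega
  have hhole : (x, y₀) ∉ S₁ := by simp [S₁, hx.2.ne]
  have hcol : lineMove S₁ (insert (x, y₀) (S₁.erase (x, t))) :=
    lineMove_column ht (fun z hz₁ hz₂ hz => Finset.mem_insert_of_mem (Finset.mem_erase.2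
      ⟨by simpa using hz, h.segment_mem _ hxt z hz₁ hz₂⟩)) hhole
  have hS₂ : insert (x, y₀) (S₁.erase (x, t)) = insert (x₀ + k, y₀) (S.erase (x, t)) := by
    ext q
    simp only [S₁, Finset.mem_insert, Finset.mem_erase]
    grind
  refine ⟨S₁, _, hrow, hS₂ ▸ hcol, h.insert_erase_farthest ht hfar, ?_⟩
  rw [Finset.card_insert_of_notMem (fun hm => hend (Finset.mem_of_mem_erase hm)),
    Finset.card_erase_add_one hxt]

theorem exists_reachIn_isLine (h : IsNiceShape S x₀ y₀ k) :
    ∃ C, isLine C ∧ C.card = S.card ∧ reachIn (2 * (S.card - k)) S C := by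
  induction hm : S.card - k generalizing S k with
  | zero =>
    have hS : S = centralLine x₀ y₀ k :=
      (Finset.eq_of_subset_of_card_le h.centralLine_subset (by rw [card_centralLine]; omega)).symm
    exact ⟨S, hS ▸ isLine_centralLine, rfl, fun _ => S, rfl, rfl, fun _ hi => by omega⟩
  | succ m ih =>
    have hS : ¬ S ⊆ centralLine x₀ y₀ k := fun hS => by
      have := Finset.card_le_card hS
      rw [card_centralLine] at this
      omega
    obtain ⟨S₁, S₂, h₁, h₂, hnice, hcard⟩ := h.exists_absorb hS
    obtain ⟨C, hC, hCcard, hreach⟩ := ih hnice (by omega)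
    exact ⟨C, hC, hCcard.trans hcard, reachIn.cons h₁ (reachIn.cons h₂ hreach)⟩

end IsNiceShape

theorem nice_shape_to_line_general (S L : Finset (ℤ × ℤ)) (x0 y0 : ℤ) (k : ℕ)
    (hL : L = (Finset.range k).image fun (i : ℕ) => ((x0 + (i : ℤ), y0) : ℤ × ℤ))
    (hLS : L ⊆ S)
    (hvert : ∀ p ∈ S, (p.1, y0) ∈ L ∧
      ∀ z : ℤ, min p.2 y0 ≤ z → z ≤ max p.2 y0 → (p.1, z) ∈ S) :
    ∃ (N : ℕ) (C : Finset (ℤ × ℤ)),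
      N ≤ 2 * (S.card - k) ∧ isLine C ∧ C.card = S.card ∧ reachIn N S C := by
  subst hL
  have h : IsNiceShape S x0 y0 k :=
    ⟨hLS, fun p hp => (hvert p hp).1, fun p hp => (hvert p hp).2⟩
  obtain ⟨C, hC, hCcard, hreach⟩ := h.exists_reachIn_isLine
  exact ⟨_, C, le_rfl, hC, hCcard, hreach⟩

/-- A nice shape of order `n`, with central horizontal line of length `k`
(every node lying on a vertical segment of occupied cells attached to the
central line), can be transformed into a straight line of order `n` in at most
`2(n - k)` line moves — in particular in `O(n)` moves. -/
theorem nice_shape_to_line (S L : Finset (ℤ × ℤ)) (x0 y0 : ℤ) (k : ℕ) (hk : 1 ≤ k)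
    (hL : L = (Finset.range k).image fun (i : ℕ) => ((x0 + (i : ℤ), y0) : ℤ × ℤ))
    (hLS : L ⊆ S)
    (hvert : ∀ p ∈ S, (p.1, y0) ∈ L ∧
      ∀ z : ℤ, min p.2 y0 ≤ z → z ≤ max p.2 y0 → (p.1, z) ∈ S) :
    ∃ (N : ℕ) (C : Finset (ℤ × ℤ)),
      N ≤ 2 * (S.card - k) ∧ isLine C ∧ C.card = S.card ∧ reachIn N S C :=
  nice_shape_to_line_general S L x0 y0 k hL hLS hvert
end
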